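/- arXiv:2008.12171 — 2 statements merged into one kernel-verified Lean document; each statement's English description precedes it below -/
import Mathlib

section
/- Let q ∈ ℍ be written q = a + b with a = x₁ + i x₂ ∈ ℍ_{1,i} and b = j x₃ + k x₄ ∈ ℍ_{j,k} (x₁,…,x₄ ∈ ℝ), and suppose a ≠ 0 and b ≠ 0 (equivalently q ∉ ℍ_{1,i} ∪ ℍ_{j,k}). Then the convex cone in the real vector space ℍ generated by the set {exp(t i) · q · exp(−s i) : t, s ∈ ℝ} is all of ℍ. -/
open Quaternion

noncomputable section

def qi : ℍ[ℝ] := ⟨0, 1, 0, 0⟩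
def qj : ℍ[ℝ] := ⟨0, 0, 1, 0⟩
def qk : ℍ[ℝ] := ⟨0, 0, 0, 1⟩

/-- the real subspace `ℍ_{1,i}` of `ℍ` spanned by `{1, i}` -/
def H1i : Submodule ℝ ℍ[ℝ] := Submodule.span ℝ {1, qi}

/-- the real subspace `ℍ_{j,k}` of `ℍ` spanned by `{j, k}` -/
def Hjk : Submodule ℝ ℍ[ℝ] := Submodule.span ℝ {qj, qk}

/-- the quaternionic exponential `exp (t i) = cos t + (sin t) i` -/
noncomputable def qexp (t : ℝ) : ℍ[ℝ] := NormedSpace.exp (t • qi)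

/-- the smallest convex cone in `ℍ` (as a real vector space) containing `S`:
the intersection of all convex cones containing `S`. -/
def coneGen (S : Set ℍ[ℝ]) : Set ℍ[ℝ] :=
  ⋂ K ∈ {K : ConvexCone ℝ ℍ[ℝ] | S ⊆ ↑K}, (K : Set ℍ[ℝ])

/-!
Write `q = α + j β` with `α, β ∈ ℂ = ℍ_{1,i}`. Since `i` commutes with `ℂ` and anticommutes
with `j`, `exp(t i) q exp(-s i) = e^{i(t-s)} α + j e^{-i(t+s)} β`, so the two phases vary
independently. Adding the points with phases `v` and `v + π` in the second summand isolates
`e^{iu} α`; positive multiples of these exhaust `ℂ ∖ {0}` and opposite phases give `0`, so the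
cone contains `ℂ`, likewise `j ℂ`, hence `ℂ + j ℂ = ℍ`.
-/

section

open Complex

theorem ConvexCone.mem_of_add_mem_of_sub_mem {𝕜 E : Type*} [Field 𝕜] [LinearOrder 𝕜]
    [IsStrictOrderedRing 𝕜] [AddCommGroup E] [Module 𝕜 E] (K : ConvexCone 𝕜 E) {x y : E}
    (h₁ : x + y ∈ K) (h₂ : x - y ∈ K) : x ∈ K := by
  have h := K.smul_mem (inv_pos.2 two_pos) (K.add_mem h₁ h₂)
  rwa [add_add_sub_cancel, ← two_smul 𝕜, smul_smul, inv_mul_cancel₀ two_ne_zero, one_smul] at h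

theorem ConvexCone.apply_mem_of_forall_exp_mul_I_mem {E : Type*} [AddCommGroup E] [Module ℝ E]
    (K : ConvexCone ℝ E) (f : ℂ →ₗ[ℝ] E) (hf : ∀ u : ℝ, f (exp (u * I)) ∈ K) (z : ℂ) :
    f z ∈ K := by
  rcases eq_or_ne z 0 with rfl | hz
  · simpa [exp_pi_mul_I] using K.add_mem (hf 0) (hf Real.pi)
  · rw [← norm_mul_exp_arg_mul_I z, ← real_smul, map_smul]
    exact K.smul_mem (norm_pos_iff.2 hz) (hf _)

theorem ConvexCone.apply_add_apply_mem {E : Type*} [AddCommGroup E] [Module ℝ E]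
    (K : ConvexCone ℝ E) (f g : ℂ →ₗ[ℝ] E)
    (h : ∀ u v : ℝ, f (exp (u * I)) + g (exp (v * I)) ∈ K) (z w : ℂ) : f z + g w ∈ K := by
  have hf (u : ℝ) : f (exp (u * I)) ∈ K :=
    K.mem_of_add_mem_of_sub_mem (y := g 1) (by simpa using h u 0)
      (by simpa [exp_pi_mul_I, sub_eq_add_neg] using h u Real.pi)
  have hg (v : ℝ) : g (exp (v * I)) ∈ K :=
    K.mem_of_add_mem_of_sub_mem (y := f 1) (by simpa [add_comm] using h 0 v)
      (by simpa [exp_pi_mul_I, sub_eq_add_neg, add_comm] using h Real.pi v)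
  exact K.add_mem (K.apply_mem_of_forall_exp_mul_I_mem f hf z)
    (K.apply_mem_of_forall_exp_mul_I_mem g hg w)

@[simp] theorem re_qi : qi.re = 0 := rfl
@[simp] theorem imI_qi : qi.imI = 1 := rfl
@[simp] theorem imJ_qi : qi.imJ = 0 := rfl
@[simp] theorem imK_qi : qi.imK = 0 := rfl
@[simp] theorem re_qj : qj.re = 0 := rfl
@[simp] theorem imI_qj : qj.imI = 0 := rfl
@[simp] theorem imJ_qj : qj.imJ = 1 := rfl
@[simp] theorem imK_qj : qj.imK = 0 := rfl
@[simp] theorem re_qk : qk.re = 0 := rfl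
@[simp] theorem imI_qk : qk.imI = 0 := rfl
@[simp] theorem imJ_qk : qk.imJ = 0 := rfl
@[simp] theorem imK_qk : qk.imK = 1 := rfl

theorem qexp_eq_coeComplex (t : ℝ) : qexp t = ↑(exp (t * I)) := by
  have hcont : Continuous ofComplex := ofComplex.toLinearMap.continuous_of_finiteDimensional
  rw [← coe_ofComplex, exp_eq_exp_ℂ, NormedSpace.map_exp _ hcont, qexp]
  congr 1
  ext <;> simp

theorem coeComplex_mul_qj (z : ℂ) : (z : ℍ[ℝ]) * qj = qj * ↑((starRingEnd ℂ) z) := by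
  ext <;> simp [re_mul, imI_mul, imJ_mul, imK_mul]

theorem exists_coeComplex_of_mem_H1i {a : ℍ[ℝ]} (ha : a ∈ H1i) : ∃ α : ℂ, a = α := by
  obtain ⟨x, y, rfl⟩ := Submodule.mem_span_pair.1 ha
  exact ⟨⟨x, y⟩, by ext <;> simp⟩

theorem exists_qj_mul_coeComplex_of_mem_Hjk {b : ℍ[ℝ]} (hb : b ∈ Hjk) : ∃ β : ℂ, b = qj * β := by
  obtain ⟨x, y, rfl⟩ := Submodule.mem_span_pair.1 hb
  exact ⟨⟨x, -y⟩, by ext <;> simp [re_mul, imI_mul, imJ_mul, imK_mul]⟩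

theorem exists_eq_coeComplex_add_qj_mul (p : ℍ[ℝ]) : ∃ γ δ : ℂ, p = γ + qj * δ :=
  ⟨⟨p.re, p.imI⟩, ⟨p.imJ, -p.imK⟩, by ext <;> simp [re_mul, imI_mul, imJ_mul, imK_mul]⟩

theorem qexp_mul_mul_qexp_neg (α β : ℂ) (t s : ℝ) :
    qexp t * (α + qj * β) * qexp (-s) =
      ↑(exp ((t - s : ℝ) * I) * α) + qj * ↑(exp ((-(t + s) : ℝ) * I) * β) := by
  have hconj : (starRingEnd ℂ) (exp (t * I)) = exp ((-t : ℝ) * I) := by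
    rw [← exp_conj]; simp
  simp only [qexp_eq_coeComplex, mul_add, add_mul, ← mul_assoc, coeComplex_mul_qj, hconj]
  simp only [mul_assoc, ← coeComplex_mul]
  rw [mul_left_comm _ α, mul_left_comm _ β, ← exp_add, ← exp_add, mul_comm α, mul_comm β]
  push_cast
  ring_nf

theorem exp_mul_I_mul_add_qj_mul_mem_orbit (α β : ℂ) (u v : ℝ) :
    ↑(exp (u * I) * α) + qj * ↑(exp (v * I) * β) ∈
      {x : ℍ[ℝ] | ∃ t s : ℝ, x = qexp t * (α + qj * β) * qexp (-s)} := by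
  refine ⟨(u - v) / 2, -(u + v) / 2, ?_⟩
  rw [qexp_mul_mul_qexp_neg, show (u - v) / 2 - -(u + v) / 2 = u by ring,
    show -((u - v) / 2 + -(u + v) / 2) = v by ring]

end

/-- if `q = a + b` with `a ∈ ℍ_{1,i} \ {0}` and `b ∈ ℍ_{j,k} \ {0}`, then the convex
cone generated by the orbit `{exp(t i) q exp(-s i) : t, s ∈ ℝ}` is all of `ℍ`. -/
theorem stmt5 (q a b : ℍ[ℝ]) (ha : a ∈ H1i) (hb : b ∈ Hjk) (ha0 : a ≠ 0) (hb0 : b ≠ 0)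
    (hq : q = a + b) :
    coneGen {x : ℍ[ℝ] | ∃ t s : ℝ, x = qexp t * q * qexp (-s)} = Set.univ := by
  obtain ⟨α, rfl⟩ := exists_coeComplex_of_mem_H1i ha
  obtain ⟨β, rfl⟩ := exists_qj_mul_coeComplex_of_mem_Hjk hb
  have hα : α ≠ 0 := by rintro rfl; exact ha0 coeComplex_zero
  have hβ : β ≠ 0 := by rintro rfl; simp at hb0
  subst hq
  refine Set.eq_univ_of_forall fun p => Set.mem_iInter₂.2 fun K hK => ?_
  let f : ℂ →ₗ[ℝ] ℍ[ℝ] := ofComplex.toLinearMap ∘ₗ LinearMap.mulRight ℝ α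
  let g : ℂ →ₗ[ℝ] ℍ[ℝ] :=
    LinearMap.mulLeft ℝ qj ∘ₗ ofComplex.toLinearMap ∘ₗ LinearMap.mulRight ℝ β
  obtain ⟨γ, δ, rfl⟩ := exists_eq_coeComplex_add_qj_mul p
  simpa [f, g, div_mul_cancel₀ _ hα, div_mul_cancel₀ _ hβ] using
    K.apply_add_apply_mem f g (fun u v => hK (exp_mul_I_mul_add_qj_mul_mem_orbit α β u v))
      (γ / α) (δ / β)
end
end

section
/- Let A ∈ sl(n,ℍ) and let B = diag(a₁+i b₁, …, aₙ+i bₙ) ∈ sl(n,ℍ) be diagonal with aᵣ, bᵣ ∈ ℝ and a₁ > a₂ ≥ ⋯ ≥ a_{n−1} > aₙ. Let p ∈ ℍ be the (1,n) entry of A and let X = p·E_{1n} be the matrix whose (1,n) entry is p and all other entries are 0. Then there exists a sequence t_k → +∞ of real numbers such that e^{−t_k(a₁−aₙ)} · exp(t_k B) · A · exp(−t_k B) converges to X in the space of n×n quaternionic matrices. -/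
open Quaternion Matrix

noncomputable section

/-- `n×n` quaternionic matrices. -/
abbrev Mq (n : ℕ) := Matrix (Fin n) (Fin n) ℍ[ℝ]

/-- `sl(n, ℍ)`: matrices whose trace has zero real part. -/
def slSet (n : ℕ) : Set (Mq n) := {X | (Matrix.trace X).re = 0}

/-- matrix exponential of quaternionic matrices -/
noncomputable def mexp {n : ℕ} (X : Mq n) : Mq n := NormedSpace.exp X

open Filter

/-!
Along integer times `t = k`, the `(r, s)` entry of `exp (t B) A exp (-t B)` is
`e^{k (a_r - a_s)} u_r^k A_{rs} u_s^{-k}`, where `u_r = exp (i b_r)` is a unit quaternion. After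
rescaling by `e^{-k (a₁ - aₙ)}`, the strict gaps `a₁ > a₂` and `a_{n-1} > aₙ` make every entry
other than `(1, n)` decay exponentially. The powers of an element of the compact group
`(S³)ⁿ` return arbitrarily close to `1`, so along a subsequence `k_j` all phases `u_r^{k_j}` tend to
`1` and the `(1, n)` entry tends to `A_{1n}`.
-/

open NormedSpace Topology

theorem exists_strictMono_forall_pow_tendsto_one {ι 𝕜 : Type*} [Finite ι]
    [NormedDivisionRing 𝕜] [ProperSpace 𝕜] {u : ι → 𝕜} (hu : ∀ i, ‖u i‖ = 1) :
    ∃ φ : ℕ → ℕ, StrictMono φ ∧ ∀ i, Tendsto (fun k => u i ^ φ k) atTop (𝓝 1) := by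
  let g : ι → Metric.sphere (0 : 𝕜) 1 := fun i => ⟨u i, by simpa using hu i⟩
  obtain ⟨φ, hφ, hlim⟩ := (mapClusterPt_one_atTop_pow g).tendsto_subseq
  refine ⟨φ, hφ, fun i => ?_⟩
  have := ((continuous_subtype_val.comp (continuous_apply i)).tendsto 1).comp hlim
  simpa [Function.comp_def, g] using this

theorem Filter.Tendsto.real_exp_mul_smul_of_neg {α E : Type*} [SeminormedAddCommGroup E]
    [NormedSpace ℝ E] {l : Filter α} {t : α → ℝ} (ht : Tendsto t l atTop) {c : ℝ} (hc : c < 0)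
    {x : α → E} {C : ℝ} (hx : ∀ k, ‖x k‖ ≤ C) :
    Tendsto (fun k => Real.exp (t k * c) • x k) l (𝓝 0) :=
  (Real.tendsto_exp_atBot.comp (ht.atTop_mul_const_of_neg hc)).zero_smul_isBoundedUnder_le
    (isBoundedUnder_of ⟨C, hx⟩)

theorem Antitone.apply_sub_apply_lt {ι : Type*} [Preorder ι] {a : ι → ℝ} (ha : Antitone a)
    {i₀ i₁ j₀ j₁ r s : ι} (hi : a i₁ < a i₀) (hj : a j₁ < a j₀) (hr : r ≠ i₀ → i₁ ≤ r)
    (hs : s ≠ j₁ → s ≤ j₀) (hrs : ¬(r = i₀ ∧ s = j₁)) :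
    a r - a s < a i₀ - a j₁ := by
  have hr' : a r ≤ a i₀ := by
    by_cases h : r = i₀
    · rw [h]
    · exact (ha (hr h)).trans hi.le
  have hs' : a j₁ ≤ a s := by
    by_cases h : s = j₁
    · rw [h]
    · exact hj.le.trans (ha (hs h))
  rcases not_and_or.mp hrs with h | h
  · linarith [ha (hr h)]
  · linarith [ha (hs h)]

theorem Matrix.exp_diagonal_mul_mul_exp_neg_diagonal_apply {m 𝔸 : Type*} [Fintype m]
    [DecidableEq m] [NormedRing 𝔸] [NormedAlgebra ℚ 𝔸] [CompleteSpace 𝔸]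
    (d : m → 𝔸) (A : Matrix m m 𝔸) (r s : m) :
    (exp (diagonal d) * A * exp (-diagonal d)) r s = exp (d r) * A r s * exp (-d s) := by
  rw [diagonal_neg, Matrix.exp_diagonal, Matrix.exp_diagonal, mul_diagonal, diagonal_mul,
    Pi.coe_exp, Pi.coe_exp]

namespace Quaternion

theorem exp_smul_eq (t : ℝ) (q : ℍ[ℝ]) :
    exp (t • q) = Real.exp (t * q.re) • exp (t • q.im) := by
  have hsplit : t • q = ((t * q.re : ℝ) : ℍ[ℝ]) + t • q.im := by
    conv_lhs => rw [← q.re_add_im]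
    rw [smul_add, coe_mul, coe_mul_eq_smul]
  have hcomm : Commute ((t * q.re : ℝ) : ℍ[ℝ]) (t • q.im) := coe_commute _ _
  -- the general exponential lemmas need a `NormedAlgebra ℚ` structure, which `ℍ[ℝ]` lacks
  -- as a global instance
  let +nondep : NormedAlgebra ℚ ℍ[ℝ] := .restrictScalars ℚ ℝ ℍ[ℝ]
  rw [hsplit, exp_add_of_commute hcomm, exp_coe, ← Real.exp_eq_exp_ℝ, coe_mul_eq_smul]

theorem norm_exp_im (q : ℍ[ℝ]) : ‖exp q.im‖ = 1 := by
  simp [norm_exp]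

theorem exp_natCast_smul (k : ℕ) (q : ℍ[ℝ]) :
    exp ((k : ℝ) • q) = Real.exp (k * q.re) • exp q.im ^ k := by
  let +nondep : NormedAlgebra ℚ ℍ[ℝ] := .restrictScalars ℚ ℝ ℍ[ℝ]
  rw [exp_smul_eq, Nat.cast_smul_eq_nsmul, NormedSpace.exp_nsmul]

theorem exp_neg_natCast_smul (k : ℕ) (q : ℍ[ℝ]) :
    exp (-((k : ℝ) • q)) = Real.exp (-(k * q.re)) • (exp q.im ^ k)⁻¹ := by
  let +nondep : NormedAlgebra ℚ ℍ[ℝ] := .restrictScalars ℚ ℝ ℍ[ℝ]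
  rw [← neg_smul, exp_smul_eq, neg_smul, Nat.cast_smul_eq_nsmul, NormedSpace.exp_neg,
    NormedSpace.exp_nsmul, neg_mul]

end Quaternion

theorem mexp_natCast_smul_diagonal_conj_apply {n : ℕ} (d : Fin n → ℍ[ℝ]) (A : Mq n) (c : ℝ)
    (k : ℕ) (r s : Fin n) :
    (Real.exp (-(k : ℝ) * c) •
        (mexp ((k : ℝ) • diagonal d) * A * mexp (-((k : ℝ) • diagonal d)))) r s
      = Real.exp (k * ((d r).re - (d s).re - c)) •
          (exp (d r).im ^ k * A r s * (exp (d s).im ^ k)⁻¹) := by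
  let +nondep : NormedAlgebra ℚ ℍ[ℝ] := .restrictScalars ℚ ℝ ℍ[ℝ]
  rw [Matrix.smul_apply, ← diagonal_smul, mexp, mexp,
    Matrix.exp_diagonal_mul_mul_exp_neg_diagonal_apply, Pi.smul_apply, Pi.smul_apply,
    Quaternion.exp_natCast_smul, Quaternion.exp_neg_natCast_smul, smul_mul_assoc, smul_mul_assoc,
    mul_smul_comm, smul_smul, smul_smul, ← Real.exp_add, ← Real.exp_add]
  congr 2
  ring

/-- if `B = diag (a₁ + i b₁, …, aₙ + i bₙ)` with `a₁ > a₂ ≥ ⋯ ≥ a_{n-1} > aₙ`,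
then along a suitable sequence `t_k → +∞` the matrices
`e^{-t_k (a₁ - aₙ)} exp(t_k B) A exp(-t_k B)` converge to `X = p E_{1n}`, where `p` is the
`(1,n)` entry of `A`. -/
theorem stmt11 (n : ℕ) (hn : 2 ≤ n) (A B : Mq n)
    (a b : Fin n → ℝ)
    (hBdiag : B = Matrix.diagonal fun r => (⟨a r, b r, 0, 0⟩ : ℍ[ℝ]))
    (ha1 : a ⟨0, by omega⟩ > a ⟨1, by omega⟩)
    (hamono : ∀ r s : Fin n, r ≤ s → a s ≤ a r)
    (han : a ⟨n - 2, by omega⟩ > a ⟨n - 1, by omega⟩) :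
    ∃ t : ℕ → ℝ, Tendsto t atTop atTop ∧
      Tendsto
        (fun k => Real.exp (-(t k) * (a ⟨0, by omega⟩ - a ⟨n - 1, by omega⟩)) •
          (mexp ((t k) • B) * A * mexp (-((t k) • B))))
        atTop
        (nhds (Matrix.single ⟨0, by omega⟩ ⟨n - 1, by omega⟩
          (A ⟨0, by omega⟩ ⟨n - 1, by omega⟩))) := by
  subst hBdiag
  set d : Fin n → ℍ[ℝ] := fun r => ⟨a r, b r, 0, 0⟩
  obtain ⟨φ, hφ, hphase⟩ := exists_strictMono_forall_pow_tendsto_one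
    (u := fun r => exp (d r).im) fun r => Quaternion.norm_exp_im _
  have ht : Tendsto (fun k => (φ k : ℝ)) atTop atTop :=
    tendsto_natCast_atTop_atTop.comp hφ.tendsto_atTop
  refine ⟨fun k => φ k, ht, tendsto_pi_nhds.2 fun r => tendsto_pi_nhds.2 fun s => ?_⟩
  refine Tendsto.congr (fun k => (mexp_natCast_smul_diagonal_conj_apply d A _ (φ k) r s).symm) ?_
  by_cases hrs : r = ⟨0, by omega⟩ ∧ s = ⟨n - 1, by omega⟩
  · have hlim := ((hphase r).mul_const (A r s)).mul ((hphase s).inv₀ one_ne_zero)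
    obtain ⟨rfl, rfl⟩ := hrs
    simpa [d] using hlim
  · rw [single_apply_of_ne _ _ _ _ _ fun h => hrs ⟨h.1.symm, h.2.symm⟩]
    refine ht.real_exp_mul_smul_of_neg (C := ‖A r s‖) ?_ fun k => ?_
    · have ha : Antitone a := fun r s h => hamono r s h
      refine sub_neg.2 (ha.apply_sub_apply_lt ha1 han (fun h => ?_) (fun h => ?_) hrs) <;>
        simp only [ne_eq, Fin.ext_iff, Fin.le_def] at h ⊢ <;> omega
    · simp
end
end
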